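/- With 𝓐 and G_𝓐 as above, the identity labeling ℓ_𝓐(i) = i on G_𝓐 is a weak harmonic labeling: for every non-leaf vertex i of G_𝓐, deg(i)·i = Σ_{j ∼ i} j. -/

import Mathlib

/-- `a` is the (integer) average of the finite set `A ⊆ ℤ` and belongs to `A`;
i.e. `A` is a harmonic subset with `av(A) = a`. -/
def avOf (A : Finset ℤ) (a : ℤ) : Prop :=
  a ∈ A ∧ (A.card : ℤ) * a = ∑ k ∈ A, k

/-- The graph `G_𝓐` associated to a collection `𝓐` of harmonic subsets of `ℤ`. -/
def Hgraph (𝓐 : Set (Finset ℤ)) : SimpleGraph {x : ℤ // ∃ A ∈ 𝓐, x ∈ A} :=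
  SimpleGraph.fromRel (fun i j => ∃ A ∈ 𝓐, ∃ a : ℤ, avOf A a ∧ a = i.1 ∧ j.1 ∈ A)

/-!
If `i` is the average of no set of `𝓐`, pick `A ∋ i` in `𝓐`: by (P3) no other set of `𝓐`
contains `i`, so the only neighbour of `i` is `av(A)` and `i` is a leaf. Otherwise
`i = av(A)`, and by (P2) and (P4) the neighbours of `i` are exactly `A \ {i}`; removing the
average from a harmonic set keeps its average, which is the claimed identity.
-/

lemma avOf.card_erase_mul_eq_sum_erase {A : Finset ℤ} {a : ℤ} (ha : avOf A a) :
    ((A.erase a).card : ℤ) * a = ∑ k ∈ A.erase a, k := by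
  rw [Finset.card_erase_of_mem ha.1, Finset.sum_erase_eq_sub ha.1, ← ha.2,
    Nat.cast_sub (Finset.one_le_card.mpr ⟨a, ha.1⟩)]
  ring

lemma avOf_unique {A : Finset ℤ} {a b : ℤ} (ha : avOf A a) (hb : avOf A b) : a = b := by
  have hcard : (A.card : ℤ) ≠ 0 := by
    exact_mod_cast (Finset.card_pos.mpr ⟨a, ha.1⟩).ne'
  exact mul_left_cancel₀ hcard (ha.2.trans hb.2.symm)

section Hgraph

variable {𝓐 : Set (Finset ℤ)}

lemma Hgraph_adj {i j : {x : ℤ // ∃ A ∈ 𝓐, x ∈ A}} :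
    (Hgraph 𝓐).Adj i j ↔ i.1 ≠ j.1 ∧
      ((∃ A ∈ 𝓐, avOf A i.1 ∧ j.1 ∈ A) ∨ ∃ A ∈ 𝓐, avOf A j.1 ∧ i.1 ∈ A) := by
  simp only [Hgraph, SimpleGraph.fromRel_adj, ne_eq, Subtype.ext_iff]
  refine and_congr Iff.rfl (or_congr ?_ ?_) <;>
  · constructor
    · rintro ⟨A, hA, a, ha, rfl, hmem⟩
      exact ⟨A, hA, ha, hmem⟩
    · rintro ⟨A, hA, ha, hmem⟩
      exact ⟨A, hA, _, ha, rfl, hmem⟩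

lemma Hgraph_adj_iff_of_not_avOf
    (hP3 : ∀ A ∈ 𝓐, ∀ B ∈ 𝓐, A ≠ B → ∀ t : ℤ, t ∈ A → t ∈ B → ∃ C ∈ 𝓐, avOf C t)
    {i : {x : ℤ // ∃ A ∈ 𝓐, x ∈ A}} (hi : ∀ A ∈ 𝓐, ¬avOf A i.1)
    {A : Finset ℤ} (hA : A ∈ 𝓐) (hiA : i.1 ∈ A) {a : ℤ} (ha : avOf A a)
    (j : {x : ℤ // ∃ A ∈ 𝓐, x ∈ A}) :
    (Hgraph 𝓐).Adj i j ↔ j.1 = a := by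
  have hA_of_mem : ∀ B ∈ 𝓐, i.1 ∈ B → B = A := fun B hB hiB => by
    by_contra hBA
    obtain ⟨C, hC, hCi⟩ := hP3 A hA B hB (Ne.symm hBA) i.1 hiA hiB
    exact hi C hC hCi
  rw [Hgraph_adj]
  constructor
  · rintro ⟨-, ⟨B, hB, hBi, -⟩ | ⟨B, hB, hBj, hiB⟩⟩
    · exact absurd hBi (hi B hB)
    · rw [hA_of_mem B hB hiB] at hBj
      exact avOf_unique hBj ha
  · rintro hja
    exact ⟨fun hij => hi A hA (hij.trans hja ▸ ha), Or.inr ⟨A, hA, hja ▸ ha, hiA⟩⟩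

lemma exists_avOf_of_not_existsUnique_adj
    (hA : ∀ A ∈ 𝓐, ∃ a : ℤ, avOf A a)
    (hP3 : ∀ A ∈ 𝓐, ∀ B ∈ 𝓐, A ≠ B → ∀ t : ℤ, t ∈ A → t ∈ B → ∃ C ∈ 𝓐, avOf C t)
    {i : {x : ℤ // ∃ A ∈ 𝓐, x ∈ A}} (hleaf : ¬∃! j, (Hgraph 𝓐).Adj i j) :
    ∃ A ∈ 𝓐, avOf A i.1 := by
  by_contra! hi
  obtain ⟨A, hA𝓐, hiA⟩ := i.2
  obtain ⟨a, ha⟩ := hA A hA𝓐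
  have hadj := Hgraph_adj_iff_of_not_avOf hP3 hi hA𝓐 hiA ha
  exact hleaf ⟨⟨a, A, hA𝓐, ha.1⟩, (hadj _).2 rfl, fun j hj => Subtype.ext ((hadj j).1 hj)⟩

lemma image_val_Hgraph_neighborSet
    (hP2 : ∀ A ∈ 𝓐, ∀ B ∈ 𝓐, ∀ a : ℤ, avOf A a → avOf B a → A = B)
    (hP4 : ∀ A ∈ 𝓐, ∀ B ∈ 𝓐, ∀ a : ℤ, avOf A a → a ∈ B → ∃ b : ℤ, avOf B b ∧ b ∈ A)
    {i : {x : ℤ // ∃ A ∈ 𝓐, x ∈ A}} {A : Finset ℤ} (hA : A ∈ 𝓐) (hi : avOf A i.1) :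
    Subtype.val '' (Hgraph 𝓐).neighborSet i = ↑(A.erase i.1) := by
  ext x
  simp only [Set.mem_image, SimpleGraph.mem_neighborSet, Hgraph_adj, Finset.coe_erase,
    Set.mem_sdiff, Finset.mem_coe, Set.mem_singleton_iff]
  constructor
  · rintro ⟨j, ⟨hij, ⟨B, hB, hBi, hjB⟩ | ⟨B, hB, hBj, hiB⟩⟩, rfl⟩
    · exact ⟨hP2 B hB A hA i.1 hBi hi ▸ hjB, Ne.symm hij⟩
    · obtain ⟨c, hc, hcA⟩ := hP4 A hA B hB i.1 hi hiB
      exact ⟨avOf_unique hc hBj ▸ hcA, Ne.symm hij⟩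
  · rintro ⟨hxA, hxi⟩
    exact ⟨⟨x, A, hA, hxA⟩, ⟨Ne.symm hxi, Or.inl ⟨A, hA, hi, hxA⟩⟩, rfl⟩

end Hgraph

theorem Hgraph_identity_weak_harmonic_general (𝓐 : Set (Finset ℤ))
    (hA : ∀ A ∈ 𝓐, 2 ≤ A.card ∧ ∃ a : ℤ, avOf A a)
    (hP2 : ∀ A ∈ 𝓐, ∀ B ∈ 𝓐, ∀ a : ℤ, avOf A a → avOf B a → A = B)
    (hP3 : ∀ A ∈ 𝓐, ∀ B ∈ 𝓐, A ≠ B → ∀ t : ℤ, t ∈ A → t ∈ B → ∃ C ∈ 𝓐, avOf C t)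
    (hP4 : ∀ A ∈ 𝓐, ∀ B ∈ 𝓐, ∀ a : ℤ, avOf A a → a ∈ B → ∃ b : ℤ, avOf B b ∧ b ∈ A) :
    ∀ i : {x : ℤ // ∃ A ∈ 𝓐, x ∈ A}, (¬ ∃! j, (Hgraph 𝓐).Adj i j) →
      (((Hgraph 𝓐).neighborSet i).ncard : ℤ) * i.1 =
        ∑ᶠ j ∈ (Hgraph 𝓐).neighborSet i, (j : {x : ℤ // ∃ A ∈ 𝓐, x ∈ A}).1 := by
  intro i hleaf
  obtain ⟨A, hA𝓐, hi⟩ :=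
    exists_avOf_of_not_existsUnique_adj (fun A h => (hA A h).2) hP3 hleaf
  have hN := image_val_Hgraph_neighborSet hP2 hP4 hA𝓐 hi
  calc (((Hgraph 𝓐).neighborSet i).ncard : ℤ) * i.1
      = ((A.erase i.1).card : ℤ) * i.1 := by
        rw [← Set.ncard_image_of_injective _ Subtype.val_injective, hN, Set.ncard_coe_finset]
    _ = ∑ k ∈ A.erase i.1, k := hi.card_erase_mul_eq_sum_erase
    _ = ∑ᶠ j ∈ (Hgraph 𝓐).neighborSet i, j.1 := by
        rw [← finsum_mem_coe_finset, ← hN, finsum_mem_image Subtype.val_injective.injOn]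

/-- For a collection `𝓐` of non-trivial harmonic subsets of `ℤ` satisfying (P1)–(P5),
the identity labeling of `G_𝓐` is a weak harmonic labeling: for every non-leaf vertex
`i`, `deg(i)·i = Σ_{j ∼ i} j`. -/
theorem Hgraph_identity_weak_harmonic (𝓐 : Set (Finset ℤ))
    (hA : ∀ A ∈ 𝓐, 2 ≤ A.card ∧ ∃ a : ℤ, avOf A a)
    (hP1 : ({x : ℤ | ∃ A ∈ 𝓐, x ∈ A}).OrdConnected)
    (hP2 : ∀ A ∈ 𝓐, ∀ B ∈ 𝓐, ∀ a : ℤ, avOf A a → avOf B a → A = B)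
    (hP3 : ∀ A ∈ 𝓐, ∀ B ∈ 𝓐, A ≠ B → ∀ t : ℤ, t ∈ A → t ∈ B → ∃ C ∈ 𝓐, avOf C t)
    (hP4 : ∀ A ∈ 𝓐, ∀ B ∈ 𝓐, ∀ a : ℤ, avOf A a → a ∈ B → ∃ b : ℤ, avOf B b ∧ b ∈ A)
    (hP5 : ∀ A ∈ 𝓐, ∀ B ∈ 𝓐,
      Relation.ReflTransGen (fun X Y => X ∈ 𝓐 ∧ Y ∈ 𝓐 ∧ ∃ a : ℤ, avOf X a ∧ a ∈ Y) A B) :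
    ∀ i : {x : ℤ // ∃ A ∈ 𝓐, x ∈ A}, (¬ ∃! j, (Hgraph 𝓐).Adj i j) →
      (((Hgraph 𝓐).neighborSet i).ncard : ℤ) * i.1 =
        ∑ᶠ j ∈ (Hgraph 𝓐).neighborSet i, (j : {x : ℤ // ∃ A ∈ 𝓐, x ∈ A}).1 :=
  Hgraph_identity_weak_harmonic_general 𝓐 hA hP2 hP3 hP4
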